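/- arXiv:2511.16638 — 2 statements merged into one kernel-verified Lean document; each statement's English description precedes it below -/
import Mathlib

section
/- For any matrix C ∈ P_n (hollow skew-persymmetric matrix in C_n), the map X ↦ C X^τ is a commuting map on H_n: (C X^τ)X − X(C X^τ) = 0 for all X ∈ H_n. -/
open Matrix

/-- `X` belongs to the Heisenberg algebra `H_n`: its only possibly nonzero entries lie
in the first row strictly above the diagonal or the last column strictly above the diagonal
(0-based indices: row 0 with column ≠ 0, or column `n-1` with row ≠ `n-1`). -/
def IsHeis {n : ℕ} {F : Type*} [Field F] (X : Matrix (Fin n) (Fin n) F) : Prop :=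
  ∀ i j : Fin n, ¬ ((i.val = 0 ∧ j.val ≠ 0) ∨ (j.val = n - 1 ∧ i.val ≠ n - 1)) → X i j = 0

/-- Anti-transpose: `(antiT X) i j = X (rev j) (rev i)`. -/
def antiT {n : ℕ} {F : Type*} [Field F] (X : Matrix (Fin n) (Fin n) F) :
    Matrix (Fin n) (Fin n) F :=
  Matrix.of fun i j => X j.rev i.rev

/-- `A ∈ C_n`: first and last rows and columns of `A` are zero. -/
def IsC {n : ℕ} {F : Type*} [Field F] (A : Matrix (Fin n) (Fin n) F) : Prop :=
  ∀ i j : Fin n, (i.val = 0 ∨ i.val = n - 1 ∨ j.val = 0 ∨ j.val = n - 1) → A i j = 0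

/-- `A ∈ P_n`: hollow skew-persymmetric matrices in `C_n`. -/
def IsP {n : ℕ} {F : Type*} [Field F] (A : Matrix (Fin n) (Fin n) F) : Prop :=
  IsC A ∧ (∀ i j : Fin n, antiT A i j = - A i j) ∧ (∀ i : Fin n, A i i.rev = 0)

/-!
`C` vanishes on the border while `X` and `X^τ` live on the first row and last column, so
`C X^τ` lives on the last column away from the corners. Hence `(C X^τ) X = 0`, and `X (C X^τ)`
can only be nonzero at the corner `(0, n-1)`, where it is `x ⬝ (C J) x` for the first row `x`
of `X` and the reversal matrix `J`. Skew-persymmetry of `C` says `C J` is skew-symmetric and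
hollowness says its diagonal vanishes, so this alternating form is zero in every characteristic.
-/

theorem Fintype.sum_sum_eq_zero_of_antisymm {ι M : Type*} [Fintype ι] [AddCommMonoid M]
    (f : ι → ι → M) (hf : ∀ i j, f i j + f j i = 0) (hdiag : ∀ i, f i i = 0) :
    ∑ i, ∑ j, f i j = 0 := by
  rw [← Fintype.sum_prod_type']
  refine Finset.sum_involution (fun p _ => p.swap) (fun p _ => hf _ _) (fun p _ hp h => ?_)
    (fun _ _ => Finset.mem_univ _) (fun p _ => p.swap_swap)
  obtain ⟨i, j⟩ := p
  obtain rfl : j = i := (Prod.ext_iff.mp h).1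
  exact hp (hdiag j)

theorem Matrix.dotProduct_mulVec_self_eq_zero {ι R : Type*} [Fintype ι] [CommRing R]
    {A : Matrix ι ι R} (hA : Aᵀ = -A) (hdiag : A.diag = 0) (x : ι → R) :
    x ⬝ᵥ A *ᵥ x = 0 := by
  simp only [dotProduct, mulVec, Finset.mul_sum]
  refine Fintype.sum_sum_eq_zero_of_antisymm _ (fun i j => ?_) (fun i => ?_)
  · have := congrFun (congrFun hA i) j
    simp only [transpose_apply, neg_apply] at this
    rw [this]; ring
  · simp [show A i i = 0 from congrFun hdiag i]

section Heisenberg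

variable {n : ℕ} {F : Type*} [Field F]

theorem IsHeis.apply_eq_zero {X : Matrix (Fin n) (Fin n) F} (hX : IsHeis X) {i j : Fin n}
    (hi : i.val ≠ 0) (hj : j.val ≠ n - 1) : X i j = 0 :=
  hX i j (by omega)

theorem IsHeis.apply_eq_zero_of_row_last {X : Matrix (Fin n) (Fin n) F} (hX : IsHeis X)
    {i : Fin n} (hi : i.val = n - 1) (j : Fin n) : X i j = 0 :=
  hX i j (by omega)

theorem IsHeis.apply_eq_zero_of_col_zero {X : Matrix (Fin n) (Fin n) F} (hX : IsHeis X)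
    (i : Fin n) {j : Fin n} (hj : j.val = 0) : X i j = 0 :=
  hX i j (by omega)

theorem IsHeis.antiT {X : Matrix (Fin n) (Fin n) F} (hX : IsHeis X) : IsHeis (antiT X) := by
  intro i j hij
  simp only [_root_.antiT, of_apply]
  exact hX _ _ (by simp only [Fin.val_rev]; omega)

theorem IsC.mul_apply_eq_zero_of_row_last {C : Matrix (Fin n) (Fin n) F} (hC : IsC C)
    (M : Matrix (Fin n) (Fin n) F) {i : Fin n} (hi : i.val = n - 1) (j : Fin n) :
    (C * M) i j = 0 :=
  (mul_apply ..).trans <| Finset.sum_eq_zero fun m _ => by rw [hC i m (by omega), zero_mul]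

theorem IsC.mul_isHeis_apply_eq_zero {C Y : Matrix (Fin n) (Fin n) F} (hC : IsC C)
    (hY : IsHeis Y) (i : Fin n) {j : Fin n} (hj : j.val ≠ n - 1) : (C * Y) i j = 0 := by
  rw [mul_apply]
  refine Finset.sum_eq_zero fun m _ => ?_
  by_cases hm : m.val = 0
  · rw [hC i m (by omega), zero_mul]
  · rw [hY.apply_eq_zero hm hj, mul_zero]

theorem IsC.mul_isHeis_mul_isHeis {C Y X : Matrix (Fin n) (Fin n) F} (hC : IsC C)
    (hY : IsHeis Y) (hX : IsHeis X) : C * Y * X = 0 := by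
  ext i j
  rw [mul_apply]
  refine Finset.sum_eq_zero fun k _ => ?_
  by_cases hk : k.val = n - 1
  · rw [hX.apply_eq_zero_of_row_last hk, mul_zero]
  · rw [hC.mul_isHeis_apply_eq_zero hY i hk, zero_mul]

theorem IsHeis.mul_isC_mul_isHeis_apply_eq_zero {X C Y : Matrix (Fin n) (Fin n) F}
    (hX : IsHeis X) (hC : IsC C) (hY : IsHeis Y) {i j : Fin n}
    (hij : ¬ (i.val = 0 ∧ j.val = n - 1)) : (X * (C * Y)) i j = 0 := by
  rw [mul_apply]
  refine Finset.sum_eq_zero fun k _ => ?_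
  by_cases hj : j.val = n - 1
  · by_cases hk : k.val = n - 1
    · rw [hC.mul_apply_eq_zero_of_row_last Y hk, mul_zero]
    by_cases hk0 : k.val = 0
    · rw [hX.apply_eq_zero_of_col_zero i hk0, zero_mul]
    · rw [hX.apply_eq_zero (by omega) hk, zero_mul]
  · rw [hC.mul_isHeis_apply_eq_zero hY k hj, mul_zero]

-- `C.submatrix id Fin.rev` is the product `C J`.
theorem mul_mul_antiT_apply (Z C X : Matrix (Fin n) (Fin n) F) (i j : Fin n) :
    (Z * (C * antiT X)) i j = Z i ⬝ᵥ C.submatrix id Fin.rev *ᵥ X j.rev := by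
  simp only [mul_apply, dotProduct, mulVec, submatrix_apply, id, _root_.antiT, of_apply]
  refine Finset.sum_congr rfl fun k _ => congrArg _ ?_
  exact (Fintype.sum_equiv Fin.revPerm _ _ fun m => by simp).symm

theorem IsP.transpose_submatrix_rev {C : Matrix (Fin n) (Fin n) F} (hC : IsP C) :
    (C.submatrix id Fin.rev)ᵀ = -C.submatrix id Fin.rev := by
  ext i j
  simpa [_root_.antiT] using hC.2.1 i j.rev

theorem IsP.diag_submatrix_rev {C : Matrix (Fin n) (Fin n) F} (hC : IsP C) :
    (C.submatrix id Fin.rev).diag = 0 :=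
  funext hC.2.2

end Heisenberg

theorem stmt7_general {n : ℕ} {F : Type*} [Field F]
    (C : Matrix (Fin n) (Fin n) F) (hC : IsP C) :
    ∀ X, IsHeis X → (C * antiT X) * X = X * (C * antiT X) := by
  intro X hX
  ext i j
  rw [hC.1.mul_isHeis_mul_isHeis hX.antiT hX]
  by_cases hij : i.val = 0 ∧ j.val = n - 1
  · obtain rfl : j.rev = i := Fin.ext (by rw [Fin.val_rev]; omega)
    rw [mul_mul_antiT_apply, dotProduct_mulVec_self_eq_zero hC.transpose_submatrix_rev
      hC.diag_submatrix_rev]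
    rfl
  · rw [hX.mul_isC_mul_isHeis_apply_eq_zero hC.1 hX.antiT hij]
    rfl

theorem stmt7 {n : ℕ} (hn : 3 ≤ n) {F : Type*} [Field F] [CharZero F]
    (C : Matrix (Fin n) (Fin n) F) (hC : IsP C) :
    ∀ X, IsHeis X → (C * antiT X) * X = X * (C * antiT X) :=
  stmt7_general C hC
end

section
/- If f : H_n → H_n is an additive commuting map, then for each 2 ≤ i ≤ n−1 and every X ∈ H_n, the (i,n)-entry of f(X) equals Σ_{j=2}^{n−1} [ f_{1,j}(e_{1,i})·X_{j,n} − X_{1,j}·f_{j,n}(e_{1,i}) ], where f_{a,b}(Y) denotes the (a,b)-entry of f(Y). -/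
open Matrix

/-! Polarizing the commuting identity at `X` and `e_{1,i}` gives
`[f X, e_{1,i}] = [X, f e_{1,i}]`. Its `(1,n)`-entry is `-f_{i,n}(X)` on the left, and on the
right it is the `(1,n)`-entry of the commutator of two Heisenberg matrices; in the first row of
a product of Heisenberg matrices only the middle indices `2 ≤ j ≤ n-1` contribute. -/

theorem mul_add_mul_eq_of_commute_add {R : Type*} [Ring R] {a b x y : R}
    (hax : a * x = x * a) (hby : b * y = y * b) (h : (a + b) * (x + y) = (x + y) * (a + b)) :
    a * y + b * x = x * b + y * a := by
  simp only [add_mul, mul_add, hax, hby] at h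
  linear_combination (norm := abel) h

section Heisenberg

variable {n : ℕ} {F : Type*} [Field F] {X Y : Matrix (Fin n) (Fin n) F}

theorem IsHeis.apply_of_val_eq_zero (hX : IsHeis X) (a : Fin n) {b : Fin n} (hb : b.val = 0) :
    X a b = 0 :=
  hX a b (by omega)

theorem IsHeis.apply_of_val_eq_last (hX : IsHeis X) {a : Fin n} (ha : a.val = n - 1) (b : Fin n) :
    X a b = 0 :=
  hX a b (by omega)

theorem IsHeis.add (hX : IsHeis X) (hY : IsHeis Y) : IsHeis (X + Y) := fun a b hab => by
  rw [Matrix.add_apply, hX a b hab, hY a b hab, add_zero]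

theorem isHeis_single {z i : Fin n} (hz : z.val = 0) (hi : i.val ≠ 0) (c : F) :
    IsHeis (single z i c) := by
  intro a b hab
  rw [single_apply, if_neg]
  rintro ⟨rfl, rfl⟩
  exact hab (Or.inl ⟨hz, hi⟩)

theorem IsHeis.mul_apply_first_row (hX : IsHeis X) (hY : IsHeis Y) {z : Fin n} (hz : z.val = 0)
    (m : Fin n) :
    (X * Y) z m = ∑ j : Fin n, if 1 ≤ j.val ∧ j.val ≤ n - 2 then X z j * Y j m else 0 := by
  rw [mul_apply]
  refine Finset.sum_congr rfl fun j _ => ?_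
  split_ifs with hj
  · rfl
  · rcases (by omega : j.val = 0 ∨ j.val = n - 1) with hj0 | hjm
    · rw [hX.apply_of_val_eq_zero z hj0, zero_mul]
    · rw [hY.apply_of_val_eq_last hjm, mul_zero]

end Heisenberg

theorem stmt11 {n : ℕ} (hn : 3 ≤ n) {F : Type*} [Field F]
    (f : Matrix (Fin n) (Fin n) F → Matrix (Fin n) (Fin n) F)
    (hmaps : ∀ X, IsHeis X → IsHeis (f X))
    (hadd : ∀ X Y, IsHeis X → IsHeis Y → f (X + Y) = f X + f Y)
    (hcomm : ∀ X, IsHeis X → f X * X = X * f X) :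
    ∀ i : Fin n, 1 ≤ i.val → i.val ≤ n - 2 → ∀ X, IsHeis X →
      f X i ⟨n - 1, by omega⟩ =
        ∑ j : Fin n, if 1 ≤ j.val ∧ j.val ≤ n - 2 then
          f (Matrix.single ⟨0, by omega⟩ i (1 : F)) ⟨0, by omega⟩ j * X j ⟨n - 1, by omega⟩
          - X ⟨0, by omega⟩ j * f (Matrix.single ⟨0, by omega⟩ i (1 : F)) j ⟨n - 1, by omega⟩
        else 0 := by
  intro i hi1 hi2 X hX
  set z : Fin n := ⟨0, by omega⟩
  set m : Fin n := ⟨n - 1, by omega⟩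
  set E := Matrix.single z i (1 : F)
  have hE : IsHeis E := isHeis_single rfl (Nat.one_le_iff_ne_zero.mp hi1) 1
  have hpolar : f X * E + f E * X = X * f E + E * f X :=
    mul_add_mul_eq_of_commute_add (hcomm X hX) (hcomm E hE)
      (by rw [← hadd X E hX hE]; exact hcomm _ (hX.add hE))
  have hentry := congr_fun (congr_fun hpolar z) m
  have hmi : m ≠ i := Fin.ne_of_val_ne (show n - 1 ≠ i.val by omega)
  rw [Matrix.add_apply, Matrix.add_apply, mul_single_apply_of_ne _ _ _ _ _ hmi,
    single_mul_apply_same, one_mul, zero_add] at hentry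
  have hfE := hmaps E hE
  have hbracket : (f E * X) z m - (X * f E) z m = ∑ j : Fin n,
      if 1 ≤ j.val ∧ j.val ≤ n - 2 then f E z j * X j m - X z j * f E j m else 0 := by
    rw [hfE.mul_apply_first_row hX rfl m, hX.mul_apply_first_row hfE rfl m,
      ← Finset.sum_sub_distrib]
    simp only [ite_sub_ite, sub_zero]
  rw [← hbracket]
  linear_combination -hentry
end
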